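/- arXiv:1108.1210 — 2 statements merged into one kernel-verified Lean document; each statement's English description precedes it below -/
import Mathlib

section
/- Let p, q ∈ (0,2] \ {1} with p > q. Then for every g : Ω → (0,∞), one has q·q'·𝓔(g^{1/q}, g^{1/q'}) ≥ p·p'·𝓔(g^{1/p}, g^{1/p'}), where p' = p/(p−1) and q' = q/(q−1). (Extended Stroock–Varopoulos inequality; note that some of the exponents 1/p', 1/q' may be negative.) -/
open Real Finset

noncomputable section

variable {Ω : Type*}

/-- Expectation `E f = ∑ ω, μ ω * f ω`. -/
def pexp [Fintype Ω] (μ : Ω → ℝ) (f : Ω → ℝ) : ℝ := ∑ ω, μ ω * f ω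

/-- Dirichlet form `𝓔(f,g) = E[f · L g]`. -/
def dform [Fintype Ω] (μ : Ω → ℝ) (L : (Ω → ℝ) →ₗ[ℝ] (Ω → ℝ)) (f g : Ω → ℝ) : ℝ :=
  pexp μ fun ω => f ω * L g ω

/-- Entropy `Ent(f) = E[f log f] − (E f) log (E f)`. -/
def entE [Fintype Ω] (μ : Ω → ℝ) (f : Ω → ℝ) : ℝ :=
  pexp μ (fun ω => f ω * Real.log (f ω)) - pexp μ f * Real.log (pexp μ f)

/-- Variance `Var(f) = E[f²] − (E f)²`. -/
def varE [Fintype Ω] (μ : Ω → ℝ) (f : Ω → ℝ) : ℝ :=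
  pexp μ (fun ω => f ω ^ 2) - (pexp μ f) ^ 2

/-- The structural conditions on the Markov generator `L`: `L 1 = 0`, self-adjointness,
positive semidefiniteness, and nonnegativity of `L f` at a global maximum point of `f`. -/
def IsGen [Fintype Ω] (μ : Ω → ℝ) (L : (Ω → ℝ) →ₗ[ℝ] (Ω → ℝ)) : Prop :=
  L (fun _ => 1) = 0 ∧
  (∀ f g, pexp μ (fun ω => f ω * L g ω) = pexp μ (fun ω => g ω * L f ω)) ∧
  (∀ f, 0 ≤ pexp μ (fun ω => f ω * L f ω)) ∧
  (∀ (f : Ω → ℝ) (ω : Ω), (∀ x, f x ≤ f ω) → 0 ≤ L f ω)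

/-- The `p`-logSob inequality with constant `C` (with the conventions for `p = 0` and `p = 1`). -/
def LogSob [Fintype Ω] (μ : Ω → ℝ) (L : (Ω → ℝ) →ₗ[ℝ] (Ω → ℝ)) (p C : ℝ) : Prop :=
  if p = 0 then
    ∀ f : Ω → ℝ, (∀ ω, 0 < f ω) →
      varE μ (fun ω => Real.log (f ω)) ≤ -(C / 2) * dform μ L f (fun ω => (f ω)⁻¹)
  else if p = 1 then
    ∀ f : Ω → ℝ, (∀ ω, 0 < f ω) →
      entE μ f ≤ C / 4 * dform μ L f (fun ω => Real.log (f ω))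
  else
    ∀ f : Ω → ℝ, (∀ ω, 0 < f ω) →
      entE μ (fun ω => f ω ^ p) ≤
        C * p ^ 2 / (4 * (p - 1)) * dform μ L (fun ω => f ω ^ (p - 1)) f

/-- Markov semigroup `T t = e^{-tL}`. -/
def heat [Fintype Ω] (L : (Ω → ℝ) →ₗ[ℝ] (Ω → ℝ)) (t : ℝ) (f : Ω → ℝ) : Ω → ℝ :=
  NormedSpace.exp ((-t) • (LinearMap.toContinuousLinearMap L)) f

/-- `‖f‖_p` for positive `f` and arbitrary real `p`, with `‖f‖_0 = exp (E log f)`. -/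
def pnorm [Fintype Ω] (μ : Ω → ℝ) (p : ℝ) (f : Ω → ℝ) : ℝ :=
  if p = 0 then Real.exp (pexp μ fun ω => Real.log (f ω))
  else (pexp μ fun ω => f ω ^ p) ^ (1 / p)

/-- `‖f‖_p = (E |f|^p)^{1/p}` for real-valued `f`. -/
def pnormAbs [Fintype Ω] (μ : Ω → ℝ) (p : ℝ) (f : Ω → ℝ) : ℝ :=
  (pexp μ fun ω => |f ω| ^ p) ^ (1 / p)

/-- Hölder conjugate `p' = p/(p-1)`, with the convention `0' = 0`. -/
def hconj (p : ℝ) : ℝ := if p = 0 then 0 else p / (p - 1)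

/-- The simple generator `L = Id − E`. -/
def simpleL [Fintype Ω] (μ : Ω → ℝ) : (Ω → ℝ) →ₗ[ℝ] (Ω → ℝ) where
  toFun f := fun ω => f ω - pexp μ f
  map_add' f g := by
    funext ω
    simp only [Pi.add_apply, pexp, mul_add, Finset.sum_add_distrib]
    ring
  map_smul' c f := by
    funext ω
    simp only [Pi.smul_apply, smul_eq_mul, pexp, RingHom.id_apply]
    rw [mul_sub, Finset.mul_sum]
    congr 1
    exact Finset.sum_congr rfl fun x _ => by ring

/-!
With `a = e^{m+d}`, `b = e^{m-d}` and `u = 2/p - 1`, the two-point quantity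
`p p' (a^{1/p} - b^{1/p}) (a^{1/p'} - b^{1/p'})` equals `8 e^m (cosh (u d) - cosh d) / (u² - 1)`,
a secant slope of the convex function `t ↦ cosh √t` between `d²` and `(u d)²`. It is therefore
nondecreasing in `u ≥ 0`, i.e. nonincreasing in `p ∈ (0, 2]`. The maximum principle and
self-adjointness turn `μ x L_{xy}` into a nonnegative symmetric off-diagonal kernel with
`𝓔(F, G) = -½ ∑_{x,y} μ x L_{xy} (F x - F y) (G x - G y)`, so the two-point inequality sums to the
theorem.
-/

lemma convexOn_sinh_Ici : ConvexOn ℝ (Set.Ici 0) sinh := by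
  refine MonotoneOn.convexOn_of_deriv (convex_Ici 0) continuous_sinh.continuousOn
    differentiable_sinh.differentiableOn ?_
  rw [Real.deriv_sinh, interior_Ici]
  intro x hx y hy hxy
  rw [cosh_le_cosh, abs_of_pos hx, abs_of_pos (Set.mem_Ioi.mp hy)]
  exact hxy

lemma sinh_div_le_sinh_div {x y : ℝ} (hx : 0 < x) (hxy : x ≤ y) : sinh x / x ≤ sinh y / y := by
  have h := convexOn_sinh_Ici.secant_mono (a := 0) Set.self_mem_Ici hx.le (hx.le.trans hxy)
    hx.ne' (hx.trans_le hxy).ne' hxy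
  simpa only [sinh_zero, sub_zero] using h

lemma convexOn_cosh_sqrt : ConvexOn ℝ (Set.Ici 0) fun t ↦ cosh √t := by
  have hderiv {t : ℝ} (ht : t ∈ Set.Ioi 0) :
      HasDerivAt (fun t ↦ cosh √t) (sinh √t / √t / 2) t := by
    convert (hasDerivAt_sqrt (ne_of_gt ht)).cosh using 1
    ring
  refine MonotoneOn.convexOn_of_deriv (convex_Ici 0)
    (continuous_cosh.comp continuous_sqrt).continuousOn ?_ ?_ <;> rw [interior_Ici]
  · exact fun t ht ↦ (hderiv ht).differentiableAt.differentiableWithinAt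
  intro s hs t ht hst
  rw [(hderiv hs).deriv, (hderiv ht).deriv]
  gcongr ?_ / 2
  exact sinh_div_le_sinh_div (sqrt_pos.mpr hs) (sqrt_le_sqrt hst)

lemma cosh_mul_sub_cosh_div_le (d : ℝ) {u v : ℝ} (hu : 0 ≤ u) (huv : u ≤ v) (hu1 : u ≠ 1)
    (hv1 : v ≠ 1) :
    (cosh (u * d) - cosh d) / (u ^ 2 - 1) ≤ (cosh (v * d) - cosh d) / (v ^ 2 - 1) := by
  rcases eq_or_ne d 0 with rfl | hd
  · simp
  have hd2 : 0 < d ^ 2 := by positivity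
  have hsq {w : ℝ} (hw : 0 ≤ w) (hw1 : w ≠ 1) : (w * d) ^ 2 ≠ d ^ 2 := by
    rwa [mul_pow, Ne, mul_eq_right₀ hd2.ne', pow_eq_one_iff_of_nonneg hw two_ne_zero]
  have h := convexOn_cosh_sqrt.secant_mono (sq_nonneg d) (sq_nonneg (u * d)) (sq_nonneg (v * d))
    (hsq hu hu1) (hsq (hu.trans huv) hv1) (by rw [mul_pow, mul_pow]; gcongr)
  simp only [sqrt_sq_eq_abs, cosh_abs] at h
  rwa [mul_pow, mul_pow, ← sub_one_mul, ← sub_one_mul, ← div_div, ← div_div,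
    div_le_div_iff_of_pos_right hd2] at h

lemma rpow_sub_rpow_mul_rpow_one_sub_sub {a b : ℝ} (ha : 0 < a) (hb : 0 < b) (r : ℝ) :
    (a ^ r - b ^ r) * (a ^ (1 - r) - b ^ (1 - r)) =
      2 * exp ((log a + log b) / 2) *
        (cosh ((log a - log b) / 2) - cosh ((2 * r - 1) * ((log a - log b) / 2))) := by
  simp only [rpow_def_of_pos ha, rpow_def_of_pos hb, cosh_eq]
  ring_nf
  simp only [← exp_add]
  ring_nf

lemma mul_conj_mul_rpow_sub_rpow {a b p : ℝ} (ha : 0 < a) (hb : 0 < b) (hp0 : p ≠ 0)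
    (hp1 : p ≠ 1) :
    p * (p / (p - 1)) * ((a ^ (1 / p) - b ^ (1 / p)) *
        (a ^ (1 / (p / (p - 1))) - b ^ (1 / (p / (p - 1))))) =
      8 * exp ((log a + log b) / 2) *
        ((cosh ((2 / p - 1) * ((log a - log b) / 2)) - cosh ((log a - log b) / 2)) /
          ((2 / p - 1) ^ 2 - 1)) := by
  have hp1' : p - 1 ≠ 0 := sub_ne_zero.mpr hp1
  rw [one_div_div, show (p - 1) / p = 1 - 1 / p by field_simp,
    rpow_sub_rpow_mul_rpow_one_sub_sub ha hb, show 2 * (1 / p) - 1 = 2 / p - 1 by ring]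
  have hden : (2 / p - 1) ^ 2 - 1 = 4 * (1 - p) / p ^ 2 := by field_simp; ring
  rw [hden]
  field_simp
  ring

lemma stroock_varopoulos_two_point {a b p q : ℝ} (ha : 0 < a) (hb : 0 < b) (hq0 : 0 < q)
    (hp2 : p ≤ 2) (hq1 : q ≠ 1) (hp1 : p ≠ 1) (hqp : q < p) :
    p * (p / (p - 1)) * ((a ^ (1 / p) - b ^ (1 / p)) *
        (a ^ (1 / (p / (p - 1))) - b ^ (1 / (p / (p - 1))))) ≤
      q * (q / (q - 1)) * ((a ^ (1 / q) - b ^ (1 / q)) *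
        (a ^ (1 / (q / (q - 1))) - b ^ (1 / (q / (q - 1))))) := by
  have hp0 : 0 < p := hq0.trans hqp
  rw [mul_conj_mul_rpow_sub_rpow ha hb hp0.ne' hp1, mul_conj_mul_rpow_sub_rpow ha hb hq0.ne' hq1]
  have hu : 0 ≤ 2 / p - 1 := by rw [sub_nonneg, le_div_iff₀ hp0]; linarith
  have hne {r : ℝ} (hr0 : r ≠ 0) (hr1 : r ≠ 1) : 2 / r - 1 ≠ 1 := by
    rw [Ne, sub_eq_iff_eq_add, div_eq_iff hr0]; contrapose! hr1; linarith
  exact mul_le_mul_of_nonneg_left (cosh_mul_sub_cosh_div_le _ hu (by gcongr)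
    (hne hp0.ne' hp1) (hne hq0.ne' hq1)) (by positivity)

lemma sum_sum_mul_sub_mul_sub [Fintype Ω] {K : Ω → Ω → ℝ}
    (hsymm : ∀ x y, K x y = K y x) (hrow : ∀ x, ∑ y, K x y = 0) (F G : Ω → ℝ) :
    ∑ x, ∑ y, K x y * ((F x - F y) * (G x - G y)) = -2 * ∑ x, ∑ y, K x y * (F x * G y) := by
  have hdiag : ∑ x, ∑ y, K x y * (F x * G x) = 0 :=
    Finset.sum_eq_zero fun x _ ↦ by rw [← Finset.sum_mul, hrow, zero_mul]
  have hswap (H : Ω → Ω → ℝ) : ∑ x, ∑ y, K x y * H y x = ∑ x, ∑ y, K x y * H x y := by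
    rw [Finset.sum_comm]
    simp only [hsymm _ _]
  have hexpand : ∀ x y, K x y * ((F x - F y) * (G x - G y)) =
      K x y * (F x * G x) - K x y * (F x * G y) - K x y * (F y * G x) + K x y * (F y * G y) :=
    fun x y ↦ by ring
  simp only [hexpand, Finset.sum_add_distrib, Finset.sum_sub_distrib]
  rw [hswap fun y x ↦ F x * G y, hswap fun y x ↦ F y * G y, hdiag]
  ring

section Generator

variable [Fintype Ω] [DecidableEq Ω] {μ : Ω → ℝ} {L : (Ω → ℝ) →ₗ[ℝ] (Ω → ℝ)}

lemma IsGen.mul_toMatrix'_symm (hL : IsGen μ L) (x y : Ω) :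
    μ x * LinearMap.toMatrix' L x y = μ y * LinearMap.toMatrix' L y x := by
  simpa [pexp, LinearMap.toMatrix'_apply, Pi.single_apply] using
    hL.2.1 (Pi.single x 1) (Pi.single y 1)

lemma IsGen.sum_toMatrix'_row (hL : IsGen μ L) (x : Ω) : ∑ y, LinearMap.toMatrix' L x y = 0 := by
  calc ∑ y, LinearMap.toMatrix' L x y = Matrix.mulVec (LinearMap.toMatrix' L) 1 x := by
        simp [Matrix.mulVec, dotProduct]
    _ = 0 := by rw [LinearMap.toMatrix'_mulVec, Pi.one_def, hL.1, Pi.zero_apply]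

lemma IsGen.toMatrix'_nonpos (hL : IsGen μ L) {x y : Ω} (hxy : x ≠ y) :
    LinearMap.toMatrix' L x y ≤ 0 := by
  have hmax : ∀ z, (-Pi.single y 1 : Ω → ℝ) z ≤ (-Pi.single y 1 : Ω → ℝ) x := by
    intro z
    rw [Pi.neg_apply, Pi.neg_apply, Pi.single_eq_of_ne hxy]
    by_cases hz : z = y <;> simp [hz]
  have h := hL.2.2.2 _ x hmax
  rw [map_neg, Pi.neg_apply, neg_nonneg] at h
  exact h

lemma dform_eq_sum_sum_toMatrix' (F G : Ω → ℝ) :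
    dform μ L F G = ∑ x, ∑ y, μ x * LinearMap.toMatrix' L x y * (F x * G y) := by
  simp only [dform, pexp, ← LinearMap.toMatrix'_mulVec, Matrix.mulVec, dotProduct, Finset.mul_sum]
  exact Finset.sum_congr rfl fun x _ ↦ Finset.sum_congr rfl fun y _ ↦ by ring

lemma IsGen.dform_eq (hL : IsGen μ L) (F G : Ω → ℝ) :
    dform μ L F G = -(1 / 2) * ∑ x, ∑ y,
      μ x * LinearMap.toMatrix' L x y * ((F x - F y) * (G x - G y)) := by
  rw [sum_sum_mul_sub_mul_sub hL.mul_toMatrix'_symm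
    (fun x ↦ by rw [← Finset.mul_sum, hL.sum_toMatrix'_row, mul_zero]),
    dform_eq_sum_sum_toMatrix']
  ring

lemma IsGen.mul_dform_le_mul_dform (hL : IsGen μ L) (hμ : ∀ ω, 0 ≤ μ ω) {c₁ c₂ : ℝ}
    {F₁ G₁ F₂ G₂ : Ω → ℝ}
    (h : ∀ x y, x ≠ y →
      c₁ * ((F₁ x - F₁ y) * (G₁ x - G₁ y)) ≤ c₂ * ((F₂ x - F₂ y) * (G₂ x - G₂ y))) :
    c₁ * dform μ L F₁ G₁ ≤ c₂ * dform μ L F₂ G₂ := by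
  have hsum (c : ℝ) (F G : Ω → ℝ) : c * dform μ L F G = 1 / 2 * ∑ x, ∑ y,
      -(μ x * LinearMap.toMatrix' L x y) * (c * ((F x - F y) * (G x - G y))) := by
    simp only [hL.dform_eq, Finset.mul_sum]
    exact Finset.sum_congr rfl fun x _ ↦ Finset.sum_congr rfl fun y _ ↦ by ring
  rw [hsum, hsum]
  refine mul_le_mul_of_nonneg_left
    (Finset.sum_le_sum fun x _ ↦ Finset.sum_le_sum fun y _ ↦ ?_) one_half_pos.le
  rcases eq_or_ne x y with rfl | hxy
  · simp
  exact mul_le_mul_of_nonneg_left (h x y hxy)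
    (neg_nonneg.mpr (mul_nonpos_of_nonneg_of_nonpos (hμ x) (hL.toMatrix'_nonpos hxy)))

end Generator

theorem stroock_varopoulos_general [Fintype Ω] (μ : Ω → ℝ)
    (hμpos : ∀ ω, 0 < μ ω)
    (L : (Ω → ℝ) →ₗ[ℝ] (Ω → ℝ)) (hL : IsGen μ L)
    (p q : ℝ) (hq0 : 0 < q) (hp2 : p ≤ 2) (hq1 : q ≠ 1) (hp1 : p ≠ 1) (hqp : q < p)
    (g : Ω → ℝ) (hg : ∀ ω, 0 < g ω) :
    p * (p / (p - 1)) *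
        dform μ L (fun ω => g ω ^ (1 / p)) (fun ω => g ω ^ (1 / (p / (p - 1)))) ≤
      q * (q / (q - 1)) *
        dform μ L (fun ω => g ω ^ (1 / q)) (fun ω => g ω ^ (1 / (q / (q - 1)))) := by
  classical
  exact hL.mul_dform_le_mul_dform (fun ω ↦ (hμpos ω).le) fun x y _ ↦
    stroock_varopoulos_two_point (hg x) (hg y) hq0 hp2 hq1 hp1 hqp

/-- extended Stroock–Varopoulos inequality. -/
theorem stroock_varopoulos [Fintype Ω] (μ : Ω → ℝ)
    (hμpos : ∀ ω, 0 < μ ω) (hμ1 : ∑ ω, μ ω = 1)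
    (L : (Ω → ℝ) →ₗ[ℝ] (Ω → ℝ)) (hL : IsGen μ L)
    (p q : ℝ) (hq0 : 0 < q) (hp2 : p ≤ 2) (hq1 : q ≠ 1) (hp1 : p ≠ 1) (hqp : q < p)
    (g : Ω → ℝ) (hg : ∀ ω, 0 < g ω) :
    p * (p / (p - 1)) *
        dform μ L (fun ω => g ω ^ (1 / p)) (fun ω => g ω ^ (1 / (p / (p - 1)))) ≤
      q * (q / (q - 1)) *
        dform μ L (fun ω => g ω ^ (1 / q)) (fun ω => g ω ^ (1 / (q / (q - 1)))) :=
  stroock_varopoulos_general μ hμpos L hL p q hq0 hp2 hq1 hp1 hqp g hg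

end
end

section
/- Let 1 < q ≤ p ≤ 2 and C > 0. If the q-logSob inequality holds with constant C, then the p-logSob inequality holds with constant ((p−1)q² / ((q−1)p²))·C. -/
open Real Finset

noncomputable section

variable {Ω : Type*}

/-! Apply the `q`-inequality to `g = f ^ (p / q)`, so that `g ^ q = f ^ p`; with the new constant it
remains to show `𝓔(g ^ (q - 1), g) ≤ 𝓔(f ^ (p - 1), f)`. A generator's Dirichlet form is
`𝓔(F, G) = ½ ∑ c(x, y) (F x - F y) (G x - G y)` with nonnegative conductances `c`, so it suffices to
compare the integrands pointwise. For positive `u, v` the product `(u^a - v^a) (u^b - v^b)` only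
grows when the exponents `a ≤ b` are pushed together keeping `a + b` fixed (convexity of
`x ↦ (u/v)^x`), and `q ≤ p ≤ 2` makes `(p - p/q, p/q)` more spread out than `(p - 1, 1)`. -/

theorem ConvexOn.add_le_add_of_mem_Icc {s : Set ℝ} {φ : ℝ → ℝ} (hφ : ConvexOn ℝ s φ)
    {a b c d : ℝ} (ha : a ∈ s) (hb : b ∈ s) (hc : c ∈ Set.Icc a b) (hs : a + b = c + d) :
    φ c + φ d ≤ φ a + φ b := by
  rw [← segment_eq_Icc (hc.1.trans hc.2)] at hc
  obtain ⟨θ, η, hθ, hη, hθη, rfl⟩ := hc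
  have hd : d = η • a + θ • b := by
    simp only [smul_eq_mul] at hs ⊢
    linear_combination -(a + b) * hθη - hs
  have hc_le := hφ.2 ha hb hθ hη hθη
  have hd_le := hφ.2 ha hb hη hθ (by rw [add_comm, hθη])
  simp only [hd, smul_eq_mul] at hc_le hd_le ⊢
  linear_combination hc_le + hd_le + (φ a + φ b) * hθη

-- Expanding both sides, this is `u^c v^d + u^d v^c ≤ u^a v^b + u^b v^a`.
theorem rpow_sub_rpow_mul_le {u v a b c d : ℝ} (hu : 0 < u) (hv : 0 < v)
    (hc : c ∈ Set.Icc a b) (hs : a + b = c + d) :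
    (u ^ a - v ^ a) * (u ^ b - v ^ b) ≤ (u ^ c - v ^ c) * (u ^ d - v ^ d) := by
  set φ : ℝ → ℝ := fun x => v ^ (a + b) * (u / v) ^ x
  have hφ : ConvexOn ℝ Set.univ φ :=
    (convexOn_rpow_left (div_pos hu hv)).smul (rpow_nonneg hv.le _)
  have hφ_apply : ∀ x y, x + y = a + b → φ x = u ^ x * v ^ y := by
    intro x y hxy
    simp only [φ, div_rpow hu.le hv.le, ← hxy, rpow_add hv]
    field_simp
  have key := hφ.add_le_add_of_mem_Icc (Set.mem_univ a) (Set.mem_univ b) hc hs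
  rw [hφ_apply a b rfl, hφ_apply b a (add_comm b a), hφ_apply c d hs.symm,
    hφ_apply d c (by rw [hs, add_comm])] at key
  have hu_add : u ^ a * u ^ b = u ^ c * u ^ d := by rw [← rpow_add hu, ← rpow_add hu, hs]
  have hv_add : v ^ a * v ^ b = v ^ c * v ^ d := by rw [← rpow_add hv, ← rpow_add hv, hs]
  linear_combination key + hu_add + hv_add

theorem LinearMap.apply_eq_sum_mul_apply_single {ι : Type*} [Fintype ι] [DecidableEq ι]
    (L : (ι → ℝ) →ₗ[ℝ] (ι → ℝ)) (g : ι → ℝ) (x : ι) :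
    L g x = ∑ y, g y * L (Pi.single y 1) x := by
  rw [← LinearMap.toMatrix'_mulVec]
  simp only [Matrix.mulVec, dotProduct, LinearMap.toMatrix'_apply, mul_comm]

/-- `-μ(x) L(x, y)`, with `L(x, y) = (L 𝟙_y) x` the matrix entry of `L`: off the diagonal, `μ(x)`
times the jump rate from `x` to `y`. -/
def conductance [DecidableEq Ω] (μ : Ω → ℝ) (L : (Ω → ℝ) →ₗ[ℝ] (Ω → ℝ)) (x y : Ω) : ℝ :=
  -(μ x * L (Pi.single y 1) x)

section Conductance

variable [DecidableEq Ω] {μ : Ω → ℝ} {L : (Ω → ℝ) →ₗ[ℝ] (Ω → ℝ)}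

theorem conductance_nonneg (hμ : ∀ ω, 0 ≤ μ ω)
    (hL_max : ∀ (f : Ω → ℝ) (ω : Ω), (∀ x, f x ≤ f ω) → 0 ≤ L f ω) {x y : Ω} (hxy : x ≠ y) :
    0 ≤ conductance μ L x y := by
  have h := hL_max (-Pi.single y 1) x fun z => by
    simp only [Pi.neg_apply, Pi.single_apply, if_neg hxy, neg_zero, neg_nonpos]
    split_ifs <;> norm_num
  rw [map_neg, Pi.neg_apply, neg_nonneg] at h
  exact neg_nonneg.mpr (mul_nonpos_of_nonneg_of_nonpos (hμ x) h)

variable [Fintype Ω]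

theorem dform_eq_neg_sum_conductance (f g : Ω → ℝ) :
    dform μ L f g = -∑ x, ∑ y, conductance μ L x y * (f x * g y) := by
  simp only [dform, pexp, conductance, L.apply_eq_sum_mul_apply_single g, Finset.mul_sum,
    ← Finset.sum_neg_distrib]
  refine Finset.sum_congr rfl fun x _ => Finset.sum_congr rfl fun y _ => ?_
  ring

theorem conductance_comm
    (hL_symm : ∀ f g, pexp μ (fun ω => f ω * L g ω) = pexp μ (fun ω => g ω * L f ω)) (x y : Ω) :
    conductance μ L x y = conductance μ L y x := by
  have h := hL_symm (Pi.single x 1) (Pi.single y 1)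
  simp only [pexp, Pi.single_apply, ite_mul, one_mul, zero_mul, mul_ite, mul_zero,
    Finset.sum_ite_eq', Finset.mem_univ, if_true] at h
  simp only [conductance, h]

theorem sum_conductance_eq_zero (hL_one : L (fun _ => 1) = 0) (x : Ω) :
    ∑ y, conductance μ L x y = 0 := by
  have h := L.apply_eq_sum_mul_apply_single (fun _ => 1) x
  simp only [hL_one, Pi.zero_apply, one_mul] at h
  simp only [conductance, Finset.sum_neg_distrib, ← Finset.mul_sum, ← h, mul_zero, neg_zero]

theorem two_mul_dform_eq_sum_conductance (hL_one : L (fun _ => 1) = 0)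
    (hL_symm : ∀ f g, pexp μ (fun ω => f ω * L g ω) = pexp μ (fun ω => g ω * L f ω)) (f g : Ω → ℝ) :
    2 * dform μ L f g = ∑ x, ∑ y, conductance μ L x y * ((f x - f y) * (g x - g y)) := by
  have hdiag_left : ∑ x, ∑ y, conductance μ L x y * (f x * g x) = 0 := by
    simp only [← Finset.sum_mul, sum_conductance_eq_zero hL_one, zero_mul, Finset.sum_const_zero]
  have hcol : ∀ y, ∑ x, conductance μ L x y = 0 := fun y => by
    simpa only [conductance_comm hL_symm y] using sum_conductance_eq_zero (μ := μ) hL_one y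
  have hdiag_right : ∑ x, ∑ y, conductance μ L x y * (f y * g y) = 0 := by
    rw [Finset.sum_comm]
    simp only [← Finset.sum_mul, hcol, zero_mul, Finset.sum_const_zero]
  have hswap : ∑ x, ∑ y, conductance μ L x y * (f y * g x)
      = ∑ x, ∑ y, conductance μ L x y * (f x * g y) := by
    rw [Finset.sum_comm]
    exact Finset.sum_congr rfl fun x _ => Finset.sum_congr rfl fun y _ => by
      rw [conductance_comm hL_symm]
  have hexpand : ∀ x y, conductance μ L x y * ((f x - f y) * (g x - g y))
      = conductance μ L x y * (f x * g x) + conductance μ L x y * (f y * g y)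
        - conductance μ L x y * (f x * g y) - conductance μ L x y * (f y * g x) :=
    fun x y => by ring
  simp only [hexpand, Finset.sum_add_distrib, Finset.sum_sub_distrib, hdiag_left, hdiag_right,
    hswap, dform_eq_neg_sum_conductance f g]
  ring

end Conductance

theorem dform_le_dform_of_forall [Fintype Ω] {μ : Ω → ℝ} {L : (Ω → ℝ) →ₗ[ℝ] (Ω → ℝ)}
    (hμ : ∀ ω, 0 ≤ μ ω) (hL : IsGen μ L) {F G Φ Ψ : Ω → ℝ}
    (h : ∀ x y, (F x - F y) * (G x - G y) ≤ (Φ x - Φ y) * (Ψ x - Ψ y)) :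
    dform μ L F G ≤ dform μ L Φ Ψ := by
  classical
  obtain ⟨hL_one, hL_symm, -, hL_max⟩ := hL
  have hsum : ∑ x, ∑ y, conductance μ L x y * ((F x - F y) * (G x - G y))
      ≤ ∑ x, ∑ y, conductance μ L x y * ((Φ x - Φ y) * (Ψ x - Ψ y)) := by
    refine Finset.sum_le_sum fun x _ => Finset.sum_le_sum fun y _ => ?_
    rcases eq_or_ne x y with rfl | hxy
    · simp
    · exact mul_le_mul_of_nonneg_left (h x y) (conductance_nonneg hμ hL_max hxy)
  rw [← two_mul_dform_eq_sum_conductance hL_one hL_symm,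
    ← two_mul_dform_eq_sum_conductance hL_one hL_symm] at hsum
  linarith

theorem dform_rpow_le_dform_rpow [Fintype Ω] {μ : Ω → ℝ} {L : (Ω → ℝ) →ₗ[ℝ] (Ω → ℝ)}
    (hμ : ∀ ω, 0 ≤ μ ω) (hL : IsGen μ L) {f : Ω → ℝ} (hf : ∀ ω, 0 < f ω) {a b c d : ℝ}
    (hc : c ∈ Set.Icc a b) (hs : a + b = c + d) :
    dform μ L (fun ω => f ω ^ a) (fun ω => f ω ^ b)
      ≤ dform μ L (fun ω => f ω ^ c) (fun ω => f ω ^ d) :=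
  dform_le_dform_of_forall hμ hL fun x y => rpow_sub_rpow_mul_le (hf x) (hf y) hc hs

theorem logSob_iff_of_ne [Fintype Ω] {μ : Ω → ℝ} {L : (Ω → ℝ) →ₗ[ℝ] (Ω → ℝ)} {p C : ℝ}
    (hp0 : p ≠ 0) (hp1 : p ≠ 1) :
    LogSob μ L p C ↔ ∀ f : Ω → ℝ, (∀ ω, 0 < f ω) →
      entE μ (fun ω => f ω ^ p) ≤
        C * p ^ 2 / (4 * (p - 1)) * dform μ L (fun ω => f ω ^ (p - 1)) f := by
  rw [LogSob, if_neg hp0, if_neg hp1]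

theorem logSob_reversing_general [Fintype Ω] (μ : Ω → ℝ)
    (hμpos : ∀ ω, 0 < μ ω)
    (L : (Ω → ℝ) →ₗ[ℝ] (Ω → ℝ)) (hL : IsGen μ L)
    (p q C : ℝ) (hC : 0 < C) (h1q : 1 < q) (hqp : q ≤ p) (hp2 : p ≤ 2)
    (h : LogSob μ L q C) :
    LogSob μ L p ((p - 1) * q ^ 2 / ((q - 1) * p ^ 2) * C) := by
  have h1p : 1 < p := h1q.trans_le hqp
  have hq0 : q ≠ 0 := by linarith
  rw [logSob_iff_of_ne hq0 h1q.ne'] at h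
  rw [logSob_iff_of_ne (by linarith) h1p.ne']
  intro f hf
  have hpq : 1 ≤ p / q := by rw [le_div_iff₀ (by linarith)]; linarith
  have hpow : ∀ ω r, (f ω ^ (p / q)) ^ r = f ω ^ (p / q * r) := fun ω r =>
    (rpow_mul (hf ω).le _ _).symm
  have hdform : dform μ L (fun ω => (f ω ^ (p / q)) ^ (q - 1)) (fun ω => f ω ^ (p / q))
      ≤ dform μ L (fun ω => f ω ^ (p - 1)) f := by
    simpa only [hpow, rpow_one] using dform_rpow_le_dform_rpow (fun ω => (hμpos ω).le) hL hf
      (a := p / q * (q - 1)) (b := p / q) (c := p - 1) (d := 1)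
      ⟨by rw [mul_sub_one, div_mul_cancel₀ p hq0]; linarith, by linarith⟩
      (by field_simp; ring)
  calc entE μ (fun ω => f ω ^ p)
      = entE μ (fun ω => (f ω ^ (p / q)) ^ q) := by
        simp only [hpow, div_mul_cancel₀ p hq0]
    _ ≤ C * q ^ 2 / (4 * (q - 1)) *
          dform μ L (fun ω => (f ω ^ (p / q)) ^ (q - 1)) (fun ω => f ω ^ (p / q)) :=
        h _ fun ω => rpow_pos_of_pos (hf ω) _
    _ ≤ C * q ^ 2 / (4 * (q - 1)) * dform μ L (fun ω => f ω ^ (p - 1)) f := by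
        gcongr
    _ = (p - 1) * q ^ 2 / ((q - 1) * p ^ 2) * C * p ^ 2 / (4 * (p - 1)) *
          dform μ L (fun ω => f ω ^ (p - 1)) f := by
        field_simp [(by linarith : q - 1 ≠ 0), (by linarith : p - 1 ≠ 0)]

/-- `q`-logSob implies `p`-logSob for `1 < q ≤ p ≤ 2`. -/
theorem logSob_reversing [Fintype Ω] (μ : Ω → ℝ)
    (hμpos : ∀ ω, 0 < μ ω) (hμ1 : ∑ ω, μ ω = 1)
    (L : (Ω → ℝ) →ₗ[ℝ] (Ω → ℝ)) (hL : IsGen μ L)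
    (p q C : ℝ) (hC : 0 < C) (h1q : 1 < q) (hqp : q ≤ p) (hp2 : p ≤ 2)
    (h : LogSob μ L q C) :
    LogSob μ L p ((p - 1) * q ^ 2 / ((q - 1) * p ^ 2) * C) :=
  logSob_reversing_general μ hμpos L hL p q C hC h1q hqp hp2 h

end
end
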